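/- Let A be a self-adjoint generalized ring and 𝔭 ∈ spec(A) a prime. Then the residue field F_𝔭 is nonzero (i.e. 1 ≠ 0 in (F_𝔭)_{[1]}) if and only if the prime 𝔭 is stable. -/

import Mathlib

open scoped Classical

noncomputable section

/-! ### Partially defined maps of finite sets -/

/-- Composition of partially defined maps of sets (`Set_•`). -/
def pcomp {X Y Z : Type} (g : Y → Option Z) (f : X → Option Y) : X → Option Z :=
  fun x => (f x).bind g

/-- The fiber of a partially defined map over a point of the target. -/
abbrev pfib {X Y : Type} (f : X → Option Y) (y : Y) : Type := {x : X // f x = some y}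

/-- The fiber of the identity partial map over `x` is a singleton. -/
def idFiberEquiv {X : Type} (x : X) : Fin 1 ≃ pfib (fun x' : X => some x') x where
  toFun _ := ⟨x, rfl⟩
  invFun _ := 0
  left_inv _ := Subsingleton.elim _ _
  right_inv p := Subtype.ext (Option.some.inj p.2).symm

/-- The fiber of the constant (total) map to the point `[1]` is everything. -/
def constFiberEquiv (X : Type) (z : Fin 1) :
    X ≃ pfib (fun _ : X => some (0 : Fin 1)) z where
  toFun x := ⟨x, congrArg some (Subsingleton.elim (0 : Fin 1) z)⟩
  invFun p := p.1
  left_inv _ := rfl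
  right_inv p := rfl

/-- The fiber of (the graph of) a bijection is a singleton. -/
def equivFiberEquiv {X Y : Type} (e : X ≃ Y) (y : Y) :
    Fin 1 ≃ pfib (fun x : X => some (e x)) y where
  toFun _ := ⟨e.symm y, congrArg some (e.apply_symm_apply y)⟩
  invFun _ := 0
  left_inv _ := Subsingleton.elim _ _
  right_inv p := Subtype.ext ((Equiv.symm_apply_eq e).mpr (Option.some.inj p.2).symm)

/-- The fiber of the map `[1] → X` with image `{x}` over `x' = x` is a singleton. -/
def pointFiberEquiv {X : Type} {x x' : X} (h : x = x') :
    Fin 1 ≃ pfib (fun _ : Fin 1 => some x) x' where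
  toFun z := ⟨z, congrArg some h⟩
  invFun p := p.1
  left_inv _ := rfl
  right_inv p := rfl

/-- Restriction of `f` to the fiber of `pcomp g f` over `z`, as a partial map into
the fiber of `g` over `z`. -/
def resMap {X Y Z : Type} (g : Y → Option Z) (f : X → Option Y) (z : Z) :
    pfib (pcomp g f) z → Option (pfib g z) :=
  fun x => (f x.1).bind fun y => if h : g y = some z then some ⟨y, h⟩ else none

/-- Identification of the fibers of the restriction `resMap g f z` with fibers of `f`. -/
def resFiberEquiv {X Y Z : Type} (g : Y → Option Z) (f : X → Option Y) (z : Z)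
    (p : pfib g z) : pfib f p.1 ≃ pfib (resMap g f z) p where
  toFun x := ⟨⟨x.1, by show (f x.1).bind g = some z; rw [x.2, Option.bind_some, p.2]⟩, by
    show (f x.1).bind _ = some p
    rw [x.2, Option.bind_some, dif_pos p.2]⟩
  invFun q := ⟨q.1.1, by
    have h := q.2
    unfold resMap at h
    rcases hf : f q.1.1 with _ | y
    · rw [hf, Option.bind_none] at h
      exact absurd h (by simp)
    · rw [hf, Option.bind_some] at h
      by_cases hg : g y = some z
      · rw [dif_pos hg] at h
        have hy : y = p.1 := congrArg Subtype.val (Option.some.inj h)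
        exact congrArg some hy
      · rw [dif_neg hg] at h
        exact absurd h (by simp)⟩
  left_inv x := Subtype.ext rfl
  right_inv q := Subtype.ext (Subtype.ext rfl)

/-! ### Fibered products -/

/-- The fibered product of two partial maps `g : Z ⇀ Y` and `f : X ⇀ Y`. -/
abbrev FP {X Y Z : Type} (g : Z → Option Y) (f : X → Option Y) : Type :=
  {p : Z × X // ∃ y : Y, g p.1 = some y ∧ f p.2 = some y}

/-- First projection of the fibered product, as a partial map. -/
def fpFst {X Y Z : Type} (g : Z → Option Y) (f : X → Option Y) : FP g f → Option Z :=
  fun p => some p.1.1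

/-- Second projection of the fibered product, as a partial map. -/
def fpSnd {X Y Z : Type} (g : Z → Option Y) (f : X → Option Y) : FP g f → Option X :=
  fun p => some p.1.2

/-- Identification of the fiber of the second projection of `Z ×_Y X` over `x`
with the fiber of `g` over `f x`. -/
def fpFiberSnd {X Y Z : Type} (g : Z → Option Y) (f : X → Option Y) {x : X} {y : Y}
    (hy : f x = some y) : pfib g y ≃ pfib (fpSnd g f) x where
  toFun w := ⟨⟨(w.1, x), ⟨y, w.2, hy⟩⟩, rfl⟩
  invFun q := ⟨q.1.1.1, by
    obtain ⟨y', hg, hf⟩ := q.1.2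
    have hx : q.1.1.2 = x := Option.some.inj q.2
    rw [hx] at hf
    have hyy : y' = y := Option.some.inj (hf.symm.trans hy)
    rw [hyy] at hg
    exact hg⟩
  left_inv w := Subtype.ext rfl
  right_inv q := by
    apply Subtype.ext
    apply Subtype.ext
    have hx : q.1.1.2 = x := Option.some.inj q.2
    exact Prod.ext rfl hx.symm

/-- Identification of the fiber of the first projection of `Z ×_Y X` over `z`
with the fiber of `f` over `g z`. -/
def fpFiberFst {X Y Z : Type} (g : Z → Option Y) (f : X → Option Y) {z : Z} {y : Y}
    (hy : g z = some y) : pfib f y ≃ pfib (fpFst g f) z where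
  toFun w := ⟨⟨(z, w.1), ⟨y, hy, w.2⟩⟩, rfl⟩
  invFun q := ⟨q.1.1.2, by
    obtain ⟨y', hg, hf⟩ := q.1.2
    have hz : q.1.1.1 = z := Option.some.inj q.2
    rw [hz] at hg
    have hyy : y' = y := Option.some.inj (hg.symm.trans hy)
    rw [hyy] at hf
    exact hf⟩
  left_inv w := Subtype.ext rfl
  right_inv q := by
    apply Subtype.ext
    apply Subtype.ext
    have hz : q.1.1.1 = z := Option.some.inj q.2
    exact Prod.ext hz.symm rfl
/-! ### Generalized rings

A generalized ring assigns to each finite set `X` a pointed set `A X`, functorially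
with respect to bijections (and hence, via the operations and units, with respect to
all partial bijections of finite sets), together with operations of multiplication
`∘ : A Y × A f → A X` and contraction `( , ) : A X × A f → A Y` for every partially
defined map `f : X ⇀ Y`, where `A f = ∏_{y ∈ Y} A (f⁻¹ y)`, and a unit `1 ∈ A [1]`,
subject to the axioms of associativity, left- and right-adjunction, left- and
right-linearity, and the unit axioms. -/

/-- The data underlying a generalized ring. -/
structure GenRingData where
  /-- the pointed set attached to a finite set `X` -/
  A : (X : Type) → [inst : Finite X] → Type
  /-- the base point `0_X ∈ A_X` -/
  zero : (X : Type) → [inst : Finite X] → A X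
  /-- the unit `1 ∈ A_{[1]}` -/
  one : A (Fin 1)
  /-- functoriality with respect to bijections of finite sets -/
  map : {X Y : Type} → [inst : Finite X] → [inst' : Finite Y] → (X ≃ Y) → A X → A Y
  /-- multiplication `∘ : A_Y × A_f → A_X` for a partially defined map `f : X ⇀ Y` -/
  mul : {X Y : Type} → [inst : Finite X] → [inst' : Finite Y] → (f : X → Option Y) →
      A Y → ((y : Y) → A (pfib f y)) → A X
  /-- contraction `( , ) : A_X × A_f → A_Y` for a partially defined map `f : X ⇀ Y` -/
  contr : {X Y : Type} → [inst : Finite X] → [inst' : Finite Y] → (f : X → Option Y) →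
      A X → ((y : Y) → A (pfib f y)) → A Y

namespace GenRingData

variable (R : GenRingData)

/-- The unit family `1_{id_X} ∈ A_{id_X}`. -/
def oneId (X : Type) [Finite X] : (x : X) → R.A (pfib (fun x' : X => some x') x) :=
  fun x => R.map (idFiberEquiv x) R.one

/-- The monoid operation `a ∘ b` on `A_{[1]}`. -/
def op (a b : R.A (Fin 1)) : R.A (Fin 1) :=
  R.mul (fun z : Fin 1 => some z) a (fun z => R.map (idFiberEquiv z) b)

/-- The `n`-fold power `a ∘ ⋯ ∘ a` in the monoid `A_{[1]}` (with `a⁰ = 1`). -/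
def opPow (a : R.A (Fin 1)) : ℕ → R.A (Fin 1)
  | 0 => R.one
  | n + 1 => R.op a (opPow a n)

/-- The left action `s ∘ a` of `A_{[1]}` on `A_X` (operation (1.2.5)). -/
def lact {X : Type} [Finite X] (s : R.A (Fin 1)) (a : R.A X) : R.A X :=
  R.mul (fun _ : X => some (0 : Fin 1)) s (fun z => R.map (constFiberEquiv X z) a)

/-- The pairing `(a, d) : A_X × A_X → A_{[1]}` (operation (1.2.6)). -/
def pair {X : Type} [Finite X] (a d : R.A X) : R.A (Fin 1) :=
  R.contr (fun _ : X => some (0 : Fin 1)) a (fun z => R.map (constFiberEquiv X z) d)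

/-- The right (diagonal) action `b ∘ c` of `(A_{[1]})^X` on `A_X` (operation (1.2.7)). -/
def ract {X : Type} [Finite X] (b : R.A X) (c : X → R.A (Fin 1)) : R.A X :=
  R.mul (fun x : X => some x) b (fun x => R.map (idFiberEquiv x) (c x))

/-- The involution `a ↦ aᵗ = (1, a)` of `A_{[1]}`. -/
def adj (a : R.A (Fin 1)) : R.A (Fin 1) := R.pair R.one a

/-- The element `(a, 1_{j_x}) ∈ A_X` obtained from `a ∈ A_{[1]}` via the
inclusion `j_x : {x} ↪ X`; for `a = 1` this is the image `1_x` of the unit. -/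
def pointElt (X : Type) [Finite X] (x : X) (a : R.A (Fin 1)) : R.A X :=
  R.contr (fun _ : Fin 1 => some x) a
    (fun x' => if h : x = x' then R.map (pointFiberEquiv h) R.one else R.zero _)

/-- The extended multiplication `A_g × A_f → A_{g∘f}`, defined fiberwise. -/
def emul {X Y Z : Type} [Finite X] [Finite Y] [Finite Z]
    (g : Y → Option Z) (f : X → Option Y)
    (c : (z : Z) → R.A (pfib g z)) (b : (y : Y) → R.A (pfib f y)) :
    (z : Z) → R.A (pfib (pcomp g f) z) :=
  fun z => R.mul (resMap g f z) (c z) (fun p => R.map (resFiberEquiv g f z p) (b p.1))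

/-- The extended contraction `A_{g∘f} × A_f → A_g`, defined fiberwise. -/
def econtr {X Y Z : Type} [Finite X] [Finite Y] [Finite Z]
    (g : Y → Option Z) (f : X → Option Y)
    (a : (z : Z) → R.A (pfib (pcomp g f) z)) (b : (y : Y) → R.A (pfib f y)) :
    (z : Z) → R.A (pfib g z) :=
  fun z => R.contr (resMap g f z) (a z) (fun p => R.map (resFiberEquiv g f z p) (b p.1))

/-- The pullback `ã ∈ A_{g̃}` of `a ∈ A_g` along the fibered product (used in
the right-linearity axiom). -/
def atilde {X Y Z : Type} [Finite X] [Finite Y] [Finite Z]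
    (g : Z → Option Y) (f : X → Option Y) (a : (y : Y) → R.A (pfib g y)) :
    (x : X) → R.A (pfib (fpSnd g f) x) :=
  fun x =>
    match hfx : f x with
    | some y => R.map (fpFiberSnd g f hfx) (a y)
    | none => R.zero _

/-- The pullback `c̃ ∈ A_{f̃}` of `c ∈ A_f` along the fibered product (used in
the right-linearity axiom). -/
def ctilde {X Y Z : Type} [Finite X] [Finite Y] [Finite Z]
    (g : Z → Option Y) (f : X → Option Y) (c : (y : Y) → R.A (pfib f y)) :
    (z : Z) → R.A (pfib (fpFst g f) z) :=
  fun z =>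
    match hgz : g z with
    | some y => R.map (fpFiberFst g f hgz) (c y)
    | none => R.zero _

end GenRingData

/-- A generalized ring: the data of `GenRingData` subject to the axioms
(pointedness, functoriality, zero laws, associativity, left/right adjunction,
left/right linearity, and the unit axioms, the latter in their reduced form over
the one-point base, which is equivalent to the general form). -/
structure GenRing where
  /-- the underlying data -/
  data : GenRingData
  /-- `A_∅ = {0}` -/
  isEmpty_eq_zero : ∀ (X : Type) [Finite X] [IsEmpty X] (a : data.A X), a = data.zero X
  /-- functoriality: identity -/
  map_refl : ∀ (X : Type) [Finite X] (a : data.A X), data.map (Equiv.refl X) a = a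
  /-- functoriality: composition -/
  map_trans : ∀ {X Y Z : Type} [Finite X] [Finite Y] [Finite Z] (e : X ≃ Y) (e' : Y ≃ Z)
      (a : data.A X), data.map (e.trans e') a = data.map e' (data.map e a)
  /-- functoriality: the maps are pointed -/
  map_zero : ∀ {X Y : Type} [Finite X] [Finite Y] (e : X ≃ Y),
      data.map e (data.zero X) = data.zero Y
  /-- `0 ∘ b = 0` -/
  mul_zero_left : ∀ {X Y : Type} [Finite X] [Finite Y] (f : X → Option Y)
      (b : (y : Y) → data.A (pfib f y)), data.mul f (data.zero Y) b = data.zero X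
  /-- `a ∘ 0_f = 0` -/
  mul_zero_right : ∀ {X Y : Type} [Finite X] [Finite Y] (f : X → Option Y) (a : data.A Y),
      data.mul f a (fun y => data.zero (pfib f y)) = data.zero X
  /-- `(0, b) = 0` -/
  contr_zero_left : ∀ {X Y : Type} [Finite X] [Finite Y] (f : X → Option Y)
      (b : (y : Y) → data.A (pfib f y)), data.contr f (data.zero X) b = data.zero Y
  /-- `(a, 0_f) = 0` -/
  contr_zero_right : ∀ {X Y : Type} [Finite X] [Finite Y] (f : X → Option Y) (a : data.A X),
      data.contr f a (fun y => data.zero (pfib f y)) = data.zero Y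
  /-- associativity: `d ∘ (c ∘ b) = (d ∘ c) ∘ b` -/
  assoc : ∀ {X Y Z : Type} [Finite X] [Finite Y] [Finite Z]
      (g : Y → Option Z) (f : X → Option Y) (d : data.A Z)
      (c : (z : Z) → data.A (pfib g z)) (b : (y : Y) → data.A (pfib f y)),
      data.mul (pcomp g f) d (data.emul g f c b) = data.mul f (data.mul g d c) b
  /-- left-adjunction: `(d, a ∘ c) = ((d, c), a)` -/
  left_adj : ∀ {X Y Z : Type} [Finite X] [Finite Y] [Finite Z]
      (g : Y → Option Z) (f : X → Option Y) (d : data.A X)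
      (a : (z : Z) → data.A (pfib g z)) (c : (y : Y) → data.A (pfib f y)),
      data.contr (pcomp g f) d (data.emul g f a c) = data.contr g (data.contr f d c) a
  /-- right-adjunction: `(d ∘ c, a) = (d, (a, c))` -/
  right_adj : ∀ {X Y Z : Type} [Finite X] [Finite Y] [Finite Z]
      (g : Y → Option Z) (f : X → Option Y) (d : data.A Y)
      (a : (z : Z) → data.A (pfib (pcomp g f) z)) (c : (y : Y) → data.A (pfib f y)),
      data.contr (pcomp g f) (data.mul f d c) a = data.contr g d (data.econtr g f a c)
  /-- left-linearity: `(d ∘ a, c) = d ∘ (a, c)` -/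
  left_lin : ∀ {X Y Z : Type} [Finite X] [Finite Y] [Finite Z]
      (g : Y → Option Z) (f : X → Option Y) (d : data.A Z)
      (a : (z : Z) → data.A (pfib (pcomp g f) z)) (c : (y : Y) → data.A (pfib f y)),
      data.contr f (data.mul (pcomp g f) d a) c = data.mul g d (data.econtr g f a c)
  /-- right-linearity: `(d, c) ∘ a = (d ∘ ã, c̃)`, with `ã`, `c̃` the pullbacks
  along the fibered product `Z ×_Y X` -/
  right_lin : ∀ {X Y Z : Type} [Finite X] [Finite Y] [Finite Z]
      (g : Z → Option Y) (f : X → Option Y) (d : data.A X)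
      (a : (y : Y) → data.A (pfib g y)) (c : (y : Y) → data.A (pfib f y)),
      data.mul g (data.contr f d c) a
        = data.contr (fpFst g f) (data.mul (fpSnd g f) d (data.atilde g f a))
            (data.ctilde g f c)
  /-- unit axiom: `a ∘ 1_{id_X} = a` -/
  mul_one_id : ∀ (X : Type) [Finite X] (a : data.A X),
      data.mul (fun x : X => some x) a (data.oneId X) = a
  /-- unit axiom: `1 ∘ a = a` -/
  one_lact : ∀ (X : Type) [Finite X] (a : data.A X), data.lact data.one a = a
  /-- unit axiom: `(a, 1_{id_X}) = a` -/
  contr_one_id : ∀ (X : Type) [Finite X] (a : data.A X),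
      data.contr (fun x : X => some x) a (data.oneId X) = a
  /-- unit axiom (1.8.11): `(a, 1_f) = f_A(a)` for a bijection `f = e` -/
  map_eq_contr : ∀ {X Y : Type} [Finite X] [Finite Y] (e : X ≃ Y) (a : data.A X),
      data.contr (fun x : X => some (e x)) a
        (fun y => data.map (equivFiberEquiv e y) data.one) = data.map e a
  /-- unit axiom (1.8.11): `a ∘ 1_{fᵗ} = f_A(a)` for a bijection `f = e` -/
  map_eq_mul : ∀ {X Y : Type} [Finite X] [Finite Y] (e : X ≃ Y) (a : data.A X),
      data.mul (fun y : Y => some (e.symm y)) a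
        (fun x => data.map (equivFiberEquiv e.symm x) data.one) = data.map e a
namespace GenRing

variable (R : GenRing)

/-- An `h`-ideal of a generalized ring: a subset `I ⊆ A_{[1]}` such that
`(b ∘ c, d) ∈ I` for all finite `X`, all `b, d ∈ A_X` and all `c ∈ I^X ⊆ (A_{[1]})^X`. -/
def IsHIdeal (I : Set (R.data.A (Fin 1))) : Prop :=
  ∀ (X : Type) [Finite X], ∀ (b d : R.data.A X) (c : X → R.data.A (Fin 1)),
    (∀ x, c x ∈ I) → R.data.pair (R.data.ract b c) d ∈ I

/-- A prime of a generalized ring: a proper `h`-ideal `P` whose complement is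
closed under the multiplication of `A_{[1]}`. -/
def IsPrimeH (P : Set (R.data.A (Fin 1))) : Prop :=
  R.IsHIdeal P ∧ R.data.one ∉ P ∧
    ∀ a b : R.data.A (Fin 1), R.data.op a b ∈ P → a ∈ P ∨ b ∈ P

end GenRing

/-- The spectrum of a generalized ring: the set of its primes. -/
structure SpecG (R : GenRing) where
  /-- the underlying prime `h`-ideal -/
  I : Set (R.data.A (Fin 1))
  /-- it is prime -/
  prime : R.IsPrimeH I

namespace GenRing

variable (R : GenRing)

/-- The basic open set `D_a = {𝔭 : a ∉ 𝔭}` of the Zariski topology. -/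
def basicOpen (a : R.data.A (Fin 1)) : Set (SpecG R) := {p | a ∉ p.I}

/-- The closed set `V(s) = {𝔭 : 𝔭 ⊇ s}` of the Zariski topology. -/
def zeroLocus (s : Set (R.data.A (Fin 1))) : Set (SpecG R) := {p | s ⊆ p.I}

/-- The Zariski topology on the spectrum, generated by the basic open sets. -/
instance : TopologicalSpace (SpecG R) :=
  TopologicalSpace.generateFrom {U | ∃ a : R.data.A (Fin 1), U = R.basicOpen a}

end GenRing

/-- A homomorphism of generalized rings: a (pointed, natural) family of maps
preserving multiplication, contraction and the unit. -/
structure GenRingHom (R S : GenRing) where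
  /-- the underlying family of maps -/
  app : (X : Type) → [inst : Finite X] → R.data.A X → S.data.A X
  /-- zero is preserved -/
  app_zero : ∀ (X : Type) [Finite X], app X (R.data.zero X) = S.data.zero X
  /-- the unit is preserved -/
  app_one : app (Fin 1) R.data.one = S.data.one
  /-- naturality with respect to bijections -/
  app_map : ∀ {X Y : Type} [Finite X] [Finite Y] (e : X ≃ Y) (a : R.data.A X),
      app Y (R.data.map e a) = S.data.map e (app X a)
  /-- multiplication is preserved -/
  app_mul : ∀ {X Y : Type} [Finite X] [Finite Y] (f : X → Option Y)
      (a : R.data.A Y) (b : (y : Y) → R.data.A (pfib f y)),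
      app X (R.data.mul f a b) = S.data.mul f (app Y a) (fun y => app (pfib f y) (b y))
  /-- contraction is preserved -/
  app_contr : ∀ {X Y : Type} [Finite X] [Finite Y] (f : X → Option Y)
      (a : R.data.A X) (b : (y : Y) → R.data.A (pfib f y)),
      app Y (R.data.contr f a b) = S.data.contr f (app X a) (fun y => app (pfib f y) (b y))

namespace GenRingHom

variable {R S : GenRing} (φ : GenRingHom R S)

theorem app_op (a b : R.data.A (Fin 1)) :
    φ.app (Fin 1) (R.data.op a b) = S.data.op (φ.app (Fin 1) a) (φ.app (Fin 1) b) := by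
  unfold GenRingData.op
  rw [φ.app_mul]
  congr 1
  funext z
  rw [φ.app_map]

theorem app_ract {X : Type} [Finite X] (b : R.data.A X) (c : X → R.data.A (Fin 1)) :
    φ.app X (R.data.ract b c) = S.data.ract (φ.app X b) (fun x => φ.app (Fin 1) (c x)) := by
  unfold GenRingData.ract
  rw [φ.app_mul]
  congr 1
  funext x
  rw [φ.app_map]

theorem app_pair {X : Type} [Finite X] (a d : R.data.A X) :
    φ.app (Fin 1) (R.data.pair a d) = S.data.pair (φ.app X a) (φ.app X d) := by
  unfold GenRingData.pair
  rw [φ.app_contr]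
  congr 1
  funext z
  rw [φ.app_map]

theorem app_lact {X : Type} [Finite X] (s : R.data.A (Fin 1)) (a : R.data.A X) :
    φ.app X (R.data.lact s a) = S.data.lact (φ.app (Fin 1) s) (φ.app X a) := by
  unfold GenRingData.lact
  rw [φ.app_mul]
  congr 1
  funext z
  rw [φ.app_map]

/-- The map `spec(φ) : spec(S) → spec(R)`, `𝔮 ↦ φ_{[1]}⁻¹(𝔮)`, induced by a
homomorphism of generalized rings `φ : R → S`. -/
def specMap (q : SpecG S) : SpecG R where
  I := φ.app (Fin 1) ⁻¹' q.I
  prime := by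
    refine ⟨?_, ?_, ?_⟩
    · intro X _ b d c hc
      show φ.app (Fin 1) (R.data.pair (R.data.ract b c) d) ∈ q.I
      rw [φ.app_pair, φ.app_ract]
      exact q.prime.1 X (φ.app X b) (φ.app X d) (fun x => φ.app (Fin 1) (c x)) hc
    · show φ.app (Fin 1) R.data.one ∉ q.I
      rw [φ.app_one]
      exact q.prime.2.1
    · intro a b hab
      have h : S.data.op (φ.app (Fin 1) a) (φ.app (Fin 1) b) ∈ q.I := by
        rw [← φ.app_op]; exact hab
      exact q.prime.2.2 _ _ h

end GenRingHom

/-- An equivalence ideal of a generalized ring: a family of equivalence relations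
on the sets `A_X` respecting the operations of multiplication and contraction. -/
structure EqvIdeal (R : GenRing) where
  /-- the family of relations -/
  rel : (X : Type) → [inst : Finite X] → R.data.A X → R.data.A X → Prop
  refl : ∀ (X : Type) [Finite X] (a : R.data.A X), rel X a a
  symm : ∀ (X : Type) [Finite X] {a b : R.data.A X}, rel X a b → rel X b a
  trans : ∀ (X : Type) [Finite X] {a b c : R.data.A X}, rel X a b → rel X b c → rel X a c
  /-- `a ∼ a'` implies `a ∘ b ∼ a' ∘ b` -/
  mul_left : ∀ {X Y : Type} [Finite X] [Finite Y] (f : X → Option Y) {a a' : R.data.A Y}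
      (b : (y : Y) → R.data.A (pfib f y)),
      rel Y a a' → rel X (R.data.mul f a b) (R.data.mul f a' b)
  /-- `b ∼ b'` (componentwise) implies `a ∘ b ∼ a ∘ b'` -/
  mul_right : ∀ {X Y : Type} [Finite X] [Finite Y] (f : X → Option Y) (a : R.data.A Y)
      {b b' : (y : Y) → R.data.A (pfib f y)},
      (∀ y, rel (pfib f y) (b y) (b' y)) → rel X (R.data.mul f a b) (R.data.mul f a b')
  /-- `a ∼ a'` implies `(a, b) ∼ (a', b)` -/
  contr_left : ∀ {X Y : Type} [Finite X] [Finite Y] (f : X → Option Y) {a a' : R.data.A X}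
      (b : (y : Y) → R.data.A (pfib f y)),
      rel X a a' → rel Y (R.data.contr f a b) (R.data.contr f a' b)
  /-- `b ∼ b'` (componentwise) implies `(a, b) ∼ (a, b')` -/
  contr_right : ∀ {X Y : Type} [Finite X] [Finite Y] (f : X → Option Y) (a : R.data.A X)
      {b b' : (y : Y) → R.data.A (pfib f y)},
      (∀ y, rel (pfib f y) (b y) (b' y)) → rel Y (R.data.contr f a b) (R.data.contr f a b')

namespace GenRing

variable (R : GenRing)

/-- The equivalence ideal `E(I)` generated by an (`h`-)ideal `I`: `a ∼ b` iff the
pair `(a, b)` belongs to every equivalence ideal containing `(i, 0)` for all `i ∈ I`. -/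
def erel (I : Set (R.data.A (Fin 1))) (X : Type) [Finite X] (a b : R.data.A X) : Prop :=
  ∀ ε : EqvIdeal R, (∀ i ∈ I, ε.rel (Fin 1) i (R.data.zero (Fin 1))) → ε.rel X a b

/-- A stable `h`-ideal: an `h`-ideal `I` such that for every pair `(a, b)` in the
equivalence ideal `E(I)` generated by `I` one has `a ∈ I ↔ b ∈ I`. -/
def IsStableHIdeal (I : Set (R.data.A (Fin 1))) : Prop :=
  R.IsHIdeal I ∧ ∀ a b : R.data.A (Fin 1), R.erel I (Fin 1) a b → (a ∈ I ↔ b ∈ I)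

/-- A multiplicative subset of `A_{[1]}`: contains `1`, closed under `∘`,
and stable under the involution. -/
def IsMulSet (S : Set (R.data.A (Fin 1))) : Prop :=
  R.data.one ∈ S ∧ (∀ a ∈ S, ∀ b ∈ S, R.data.op a b ∈ S) ∧
    (∀ a, a ∈ S ↔ R.data.adj a ∈ S)

/-- `φ : R → L` presents `L` as the localization `S⁻¹R` of `R` at the
multiplicative subset `S ⊆ A_{[1]}`: every element of `S` becomes invertible, every
element of `L` is a fraction `φ(a)/φ(s)`, and `φ(a) = φ(b)` iff `s ∘ a = s ∘ b`
for some `s ∈ S`. -/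
def IsLocalizationAt (S : Set (R.data.A (Fin 1))) {L : GenRing} (φ : GenRingHom R L) : Prop :=
  (∀ s ∈ S, ∃ t : L.data.A (Fin 1),
      L.data.op t (φ.app (Fin 1) s) = L.data.one ∧
      L.data.op (φ.app (Fin 1) s) t = L.data.one) ∧
  (∀ (X : Type) [Finite X], ∀ l : L.data.A X, ∃ (a : R.data.A X) (s : R.data.A (Fin 1)),
      s ∈ S ∧ L.data.lact (φ.app (Fin 1) s) l = φ.app X a) ∧
  (∀ (X : Type) [Finite X], ∀ a b : R.data.A X,
      φ.app X a = φ.app X b ↔ ∃ s ∈ S, R.data.lact s a = R.data.lact s b)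

end GenRing

/-!
In a self-adjoint generalized ring the left action of a scalar `a ∈ A_{[1]}` on `A_X` coincides
with the contraction against `a` placed along the diagonal, and also with the diagonal
multiplication by `a`. Hence `A_{[1]}` is commutative and left multiplication by a scalar commutes
with every multiplication and contraction. This makes fractions compatible with the operations:
"`s ∘ u = a/1` and `s ∘ v = b/1` with `a ∼ b` modulo `E(𝔭)` for some `s ∉ 𝔭`" is an equivalence
ideal of `A_𝔭`, and it contains `E(m_𝔭)`.

If `𝔭` is stable but `1 ∼ 0` modulo `E(m_𝔭)`, this gives `s, r, r' ∉ 𝔭` with `r' ∘ r ∘ s ∼ 0`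
modulo `E(𝔭)`, so stability puts `r' ∘ r ∘ s` in `𝔭`, contradicting primality. Conversely, if
`1 ≁ 0`, every element outside `m_𝔭` is a unit, so `z ∼ 0` modulo `E(m_𝔭)` iff `z ∈ m_𝔭`. Since
`x ∈ 𝔭 ↔ x/1 ∈ m_𝔭` and `E(𝔭)` maps into `E(m_𝔭)`, the prime `𝔭` is stable.
-/

instance {X Y : Type} [Subsingleton X] (f : X → Option Y) (y : Y) : Subsingleton (pfib f y) :=
  ⟨fun _ _ => Subtype.ext (Subsingleton.elim _ _)⟩

theorem pfib_subsingleton_of_injective {Q T : Type} {F : Q → Option T} {g : Q → T}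
    (hF : ∀ q, F q = some (g q)) (hg : g.Injective) (t : T) : Subsingleton (pfib F t) :=
  ⟨fun a b => Subtype.ext <| hg <| Option.some.inj <|
    (hF a.1).symm.trans (a.2.trans (b.2.symm.trans (hF b.1)))⟩

theorem pfib_heq {Q T : Type} {F F' : Q → Option T} (h : F = F') {t : T}
    (x : pfib F t) (y : pfib F' t) (hxy : x.1 = y.1) : HEq x y := by
  subst h
  exact heq_of_eq (Subtype.ext hxy)

theorem pcomp_some_left {X Y : Type} (f : X → Option Y) : pcomp (fun y : Y => some y) f = f := by
  funext x
  show (f x).bind some = f x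
  cases f x <;> rfl

def pfibEquiv {Q D Y : Type} (B : Q ≃ D) (F : Q → Option Y) (F' : D → Option Y)
    (h : ∀ q, F q = F' (B q)) (y : Y) : pfib F y ≃ pfib F' y where
  toFun q := ⟨B q.1, by rw [← h]; exact q.2⟩
  invFun d := ⟨B.symm d.1, by rw [h, B.apply_symm_apply]; exact d.2⟩
  left_inv q := Subtype.ext (B.symm_apply_apply q.1)
  right_inv d := Subtype.ext (B.apply_symm_apply d.1)

def equivPfibOfConst {D T : Type} (F : D → Option T) (t : T) (hF : ∀ d, F d = some t) :
    D ≃ pfib F t where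
  toFun d := ⟨d, hF d⟩
  invFun p := p.1
  left_inv _ := rfl
  right_inv _ := rfl

def equivFPOfConst {D T : Type} (F : D → Option T) (f : Fin 1 → Option T) {t : T}
    (hF : ∀ d, F d = some t) (hf : f 0 = some t) : D ≃ FP F f where
  toFun d := ⟨(d, 0), ⟨t, hF d, hf⟩⟩
  invFun p := p.1.1
  left_inv _ := rfl
  right_inv _ := Subtype.ext (Prod.ext rfl (Subsingleton.elim _ _))

namespace GenRingData

variable (R : GenRingData)

theorem atilde_of_eq {X Y Z : Type} [Finite X] [Finite Y] [Finite Z]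
    (g : Z → Option Y) (f : X → Option Y) (a : (y : Y) → R.A (pfib g y)) {x : X} {y : Y}
    (hy : f x = some y) : R.atilde g f a x = R.map (fpFiberSnd g f hy) (a y) := by
  unfold atilde
  split
  · rename_i y' hy'
    obtain rfl : y' = y := Option.some.inj (hy'.symm.trans hy)
    rfl
  · rename_i hy'
    exact absurd (hy'.symm.trans hy) (by simp)

theorem ctilde_of_eq {X Y Z : Type} [Finite X] [Finite Y] [Finite Z]
    (g : Z → Option Y) (f : X → Option Y) (c : (y : Y) → R.A (pfib f y)) {z : Z} {y : Y}
    (hy : g z = some y) : R.ctilde g f c z = R.map (fpFiberFst g f hy) (c y) := by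
  unfold ctilde
  split
  · rename_i y' hy'
    obtain rfl : y' = y := Option.some.inj (hy'.symm.trans hy)
    rfl
  · rename_i hy'
    exact absurd (hy'.symm.trans hy) (by simp)

end GenRingData

namespace GenRing

variable (G : GenRing)

theorem map_heq_map {X T₁ T₂ : Type} [Finite X] [Finite T₁] [Finite T₂] (h : T₁ = T₂)
    (e₁ : X ≃ T₁) (e₂ : X ≃ T₂) (he : ∀ x, HEq (e₁ x) (e₂ x)) (a : G.data.A X) :
    HEq (G.data.map e₁ a) (G.data.map e₂ a) := by
  subst h
  rw [Equiv.ext fun x => eq_of_heq (he x)]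

theorem map_heq_map_of_subsingleton {X T₁ T₂ : Type} [Finite X] [Finite T₁] [Finite T₂]
    (h : T₁ = T₂) (hT : Subsingleton T₂) (e₁ : X ≃ T₁) (e₂ : X ≃ T₂)
    (a : G.data.A X) :
    HEq (G.data.map e₁ a) (G.data.map e₂ a) := by
  subst h
  rw [Subsingleton.elim e₁ e₂]

theorem map_heq_self {X Y : Type} {F F' : X → Option Y} (h : F = F') {z : Y}
    [Finite (pfib F z)] [Finite (pfib F' z)] (E : pfib F z ≃ pfib F' z)
    (hE : ∀ q, (E q).1 = q.1)
    (a : G.data.A (pfib F z)) : HEq (G.data.map E a) a := by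
  subst h
  rw [show E = Equiv.refl _ from Equiv.ext fun q => Subtype.ext (hE q), G.map_refl]

theorem mul_congr {X Y : Type} [Finite X] [Finite Y] {f g : X → Option Y} (h : f = g)
    (a : G.data.A Y) {b : (y : Y) → G.data.A (pfib f y)} {c : (y : Y) → G.data.A (pfib g y)}
    (hbc : ∀ y, HEq (b y) (c y)) : G.data.mul f a b = G.data.mul g a c := by
  subst h
  rw [funext fun y => eq_of_heq (hbc y)]

theorem contr_congr {X Y : Type} [Finite X] [Finite Y] {f g : X → Option Y} (h : f = g)
    (a : G.data.A X) {b : (y : Y) → G.data.A (pfib f y)} {c : (y : Y) → G.data.A (pfib g y)}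
    (hbc : ∀ y, HEq (b y) (c y)) : G.data.contr f a b = G.data.contr g a c := by
  subst h
  rw [funext fun y => eq_of_heq (hbc y)]

theorem mul_eq_map_of_units {Q T : Type} [Finite Q] [Finite T] (F : Q → Option T) (e : T ≃ Q)
    (hF : ∀ q, F q = some (e.symm q)) (a : G.data.A T) (u : (t : T) → G.data.A (pfib F t))
    (hu : ∀ t, ∃ e₁ : Fin 1 ≃ pfib F t, u t = G.data.map e₁ G.data.one) :
    G.data.mul F a u = G.data.map e a := by
  have hFe : F = fun q => some (e.symm q) := funext hF
  rw [← G.map_eq_mul e a]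
  refine mul_congr G hFe a fun t => ?_
  obtain ⟨e₁, he₁⟩ := hu t
  rw [he₁]
  exact map_heq_map_of_subsingleton G (by rw [hFe])
    (pfib_subsingleton_of_injective (fun _ => rfl) e.symm.injective t) _ _ _

theorem contr_eq_map_of_units {Q T : Type} [Finite Q] [Finite T] (F : Q → Option T) (e : Q ≃ T)
    (hF : ∀ q, F q = some (e q)) (a : G.data.A Q) (u : (t : T) → G.data.A (pfib F t))
    (hu : ∀ t, ∃ e₁ : Fin 1 ≃ pfib F t, u t = G.data.map e₁ G.data.one) :
    G.data.contr F a u = G.data.map e a := by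
  have hFe : F = fun q => some (e q) := funext hF
  rw [← G.map_eq_contr e a]
  refine contr_congr G hFe a fun t => ?_
  obtain ⟨e₁, he₁⟩ := hu t
  rw [he₁]
  exact map_heq_map_of_subsingleton G (by rw [hFe])
    (pfib_subsingleton_of_injective (fun _ => rfl) e.injective t) _ _ _

theorem op_eq_lact (s a : G.data.A (Fin 1)) : G.data.op s a = G.data.lact s a := by
  apply mul_congr G (funext fun z : Fin 1 => congrArg some (Subsingleton.elim z 0)) s
  intro z
  exact map_heq_map_of_subsingleton G
    (congrArg (fun f : Fin 1 → Option (Fin 1) => pfib f z)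
      (funext fun w : Fin 1 => congrArg some (Subsingleton.elim w 0)))
    inferInstance (idFiberEquiv z) (constFiberEquiv (Fin 1) z) a

theorem op_one_left (a : G.data.A (Fin 1)) : G.data.op G.data.one a = a := by
  rw [op_eq_lact]; exact G.one_lact _ a

theorem op_one_right (a : G.data.A (Fin 1)) : G.data.op a G.data.one = a :=
  G.mul_one_id (Fin 1) a

theorem lact_zero {X : Type} [Finite X] (s : G.data.A (Fin 1)) :
    G.data.lact s (G.data.zero X) = G.data.zero X := by
  unfold GenRingData.lact
  simp only [G.map_zero]
  exact G.mul_zero_right _ s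

theorem op_zero_right (a : G.data.A (Fin 1)) : G.data.op a (G.data.zero _) = G.data.zero _ := by
  rw [op_eq_lact, lact_zero]

theorem lact_one_right (v : G.data.A (Fin 1)) : G.data.lact v G.data.one = v := by
  rw [← op_eq_lact, op_one_right]

theorem map_lact {Q D : Type} [Finite Q] [Finite D] (B : Q ≃ D) (s : G.data.A (Fin 1))
    (x : G.data.A Q) : G.data.map B (G.data.lact s x) = G.data.lact s (G.data.map B x) := by
  rw [← G.map_eq_mul B (G.data.lact s x)]
  unfold GenRingData.lact
  rw [← G.assoc]
  refine mul_congr G rfl s fun z => ?_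
  have hemul : G.data.emul (fun _ : Q => some (0 : Fin 1)) (fun d => some (B.symm d))
      (fun z => G.data.map (constFiberEquiv Q z) x)
      (fun q => G.data.map (equivFiberEquiv B.symm q) G.data.one) z
      = G.data.map (pfibEquiv B (fun _ : Q => some (0 : Fin 1))
          (pcomp (fun _ : Q => some (0 : Fin 1)) (fun d => some (B.symm d))) (fun _ => rfl) z)
          (G.data.map (constFiberEquiv Q z) x) := by
    apply mul_eq_map_of_units
    · intro p
      show (some (B.symm p.1)).bind _ = _
      rw [Option.bind_some, dif_pos (show (fun _ : Q => some (0 : Fin 1)) (B.symm p.1) = some z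
        from p.2)]
      exact congrArg some (Subtype.ext rfl)
    · exact fun t => ⟨(equivFiberEquiv B.symm t.1).trans (resFiberEquiv _ _ z t),
        (G.map_trans _ _ _).symm⟩
  rw [hemul, ← G.map_trans, ← G.map_trans]
  exact map_heq_map G rfl _ _ (fun _ => heq_of_eq (Subtype.ext rfl)) x

theorem mul_fpSnd_atilde_of_const {D T : Type} [Finite D] [Finite T] (F : D → Option T)
    (f : Fin 1 → Option T) {t : T} (hF : ∀ d, F d = some t) (hf : f 0 = some t)
    (s : G.data.A (Fin 1)) (fam : (t : T) → G.data.A (pfib F t)) (w : G.data.A D)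
    (hfam : fam t = G.data.map (equivPfibOfConst F t hF) w) :
    G.data.mul (fpSnd F f) s (G.data.atilde F f fam)
      = G.data.lact s (G.data.map (equivFPOfConst F f hF hf) w) := by
  have hconst : fpSnd F f = fun _ => some (0 : Fin 1) :=
    funext fun p => congrArg some (Subsingleton.elim p.1.2 0)
  refine mul_congr G hconst s fun z => ?_
  obtain rfl : z = 0 := Subsingleton.elim z 0
  rw [G.data.atilde_of_eq F f fam hf, hfam, ← G.map_trans, ← G.map_trans]
  exact map_heq_map G (congrArg (fun g => pfib g 0) hconst) _ _
    (fun _ => pfib_heq hconst _ _ rfl) w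

theorem mul_contr_of_const {D T : Type} [Finite D] [Finite T] (F : D → Option T)
    (f : Fin 1 → Option T) {t : T} (hF : ∀ d, F d = some t) (hf : f 0 = some t)
    (s : G.data.A (Fin 1)) (c : (t : T) → G.data.A (pfib f t))
    (fam : (t : T) → G.data.A (pfib F t)) (w : G.data.A D)
    (hfam : fam t = G.data.map (equivPfibOfConst F t hF) w) :
    G.data.mul F (G.data.contr f s c) fam
      = G.data.contr (fpFst F f) (G.data.lact s (G.data.map (equivFPOfConst F f hF hf) w))
          (G.data.ctilde F f c) := by
  rw [G.right_lin, mul_fpSnd_atilde_of_const G F f hF hf s fam w hfam]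

theorem mul_map_eq_lact {D T : Type} [Finite D] [Finite T] (F : D → Option T) (e : Fin 1 ≃ T)
    (hF : ∀ d, F d = some (e 0)) (s : G.data.A (Fin 1)) (fam : (t : T) → G.data.A (pfib F t))
    (w : G.data.A D) (hfam : fam (e 0) = G.data.map (equivPfibOfConst F (e 0) hF) w) :
    G.data.mul F (G.data.map e s) fam = G.data.lact s w := by
  rw [← G.map_eq_contr e s, mul_contr_of_const G F _ hF rfl s _ fam w hfam,
    contr_eq_map_of_units G (fpFst F _) (equivFPOfConst F _ hF rfl).symm (fun _ => rfl),
    ← map_lact, ← G.map_trans, Equiv.self_trans_symm, G.map_refl]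
  intro d
  rw [G.data.ctilde_of_eq F _ _ (hF d), ← G.map_trans]
  exact ⟨_, rfl⟩

theorem emul_apply_eq_map_lact {X Y Z : Type} [Finite X] [Finite Y] [Finite Z]
    (g : Y → Option Z) (f : X → Option Y) {z : Z} (e : Fin 1 ≃ pfib g z) (y : Y)
    (hy : (e 0).1 = y) (v : G.data.A (Fin 1)) (c : (z : Z) → G.data.A (pfib g z))
    (hc : c z = G.data.map e v) (b : (y : Y) → G.data.A (pfib f y)) :
    ∃ E : pfib f y ≃ pfib (pcomp g f) z, (∀ x, (E x).1 = x.1) ∧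
      G.data.emul g f c b z = G.data.map E (G.data.lact v (b y)) := by
  subst hy
  have : Subsingleton (pfib g z) := e.symm.subsingleton
  have hres : ∀ p, resMap g f z p = some (e 0) := by
    intro p
    have hp : (f p.1).bind g = some z := p.2
    unfold resMap
    rcases hfp : f p.1 with _ | y
    · rw [hfp] at hp; exact absurd hp (by simp)
    · rw [hfp, Option.bind_some] at hp
      rw [Option.bind_some, dif_pos hp]
      exact congrArg some (Subsingleton.elim _ _)
  refine ⟨(resFiberEquiv g f z (e 0)).trans (equivPfibOfConst (resMap g f z) (e 0) hres).symm,
    fun _ => rfl, ?_⟩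
  unfold GenRingData.emul
  rw [hc, map_lact]
  exact mul_map_eq_lact G _ e hres v _ _ (by rw [← G.map_trans]; rfl)

theorem lact_lact {X : Type} [Finite X] (x y : G.data.A (Fin 1)) (w : G.data.A X) :
    G.data.lact x (G.data.lact y w) = G.data.lact (G.data.op x y) w := by
  rw [G.op_eq_lact x y]
  unfold GenRingData.lact
  rw [← G.assoc]
  refine mul_congr G rfl x fun z => ?_
  obtain ⟨E, hE, h⟩ := emul_apply_eq_map_lact G (fun _ : Fin 1 => some (0 : Fin 1))
    (fun _ : X => some (0 : Fin 1)) (constFiberEquiv (Fin 1) z) 0 rfl y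
    (fun z => G.data.map (constFiberEquiv (Fin 1) z) y) rfl
    (fun z => G.data.map (constFiberEquiv X z) w)
  rw [h, ← map_lact, ← G.map_trans]
  exact map_heq_map G rfl _ _ (fun x => heq_of_eq (Subtype.ext (hE ⟨x, rfl⟩).symm)) _

theorem op_assoc (x y z : G.data.A (Fin 1)) :
    G.data.op x (G.data.op y z) = G.data.op (G.data.op x y) z := by
  rw [G.op_eq_lact x, G.op_eq_lact (G.data.op x y), ← G.lact_lact, G.op_eq_lact y]

def rcontr {X : Type} [Finite X] (w : G.data.A X) (v : G.data.A (Fin 1)) : G.data.A X :=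
  G.data.contr (fun x : X => some x) w (fun x => G.data.map (idFiberEquiv x) v)

theorem pair_eq_rcontr (a d : G.data.A (Fin 1)) : G.data.pair a d = G.rcontr a d := by
  apply contr_congr G (funext fun z : Fin 1 => congrArg some (Subsingleton.elim 0 z)) a
  intro z
  exact map_heq_map_of_subsingleton G
    (congrArg (fun f : Fin 1 → Option (Fin 1) => pfib f z)
      (funext fun w : Fin 1 => congrArg some (Subsingleton.elim 0 w)))
    inferInstance (constFiberEquiv (Fin 1) z) (idFiberEquiv z) d

theorem pair_one_right (a : G.data.A (Fin 1)) : G.data.pair a G.data.one = a :=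
  (pair_eq_rcontr G a _).trans (G.contr_one_id _ a)

theorem emul_some_left_heq {X Y : Type} [Finite X] [Finite Y] (f : X → Option Y)
    (v : G.data.A (Fin 1)) (b : (y : Y) → G.data.A (pfib f y)) (y : Y) :
    HEq (G.data.emul (fun y : Y => some y) f (fun y => G.data.map (idFiberEquiv y) v) b y)
      (G.data.lact v (b y)) := by
  obtain ⟨E, hE, h⟩ := emul_apply_eq_map_lact G _ f (idFiberEquiv y) y rfl v
    (fun y => G.data.map (idFiberEquiv y) v) rfl b
  rw [h]
  exact map_heq_self G (pcomp_some_left f).symm E hE _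

theorem contr_graph_eq_map_rcontr {Q D : Type} [Finite Q] [Finite D] (F : Q → Option D)
    (E : Q ≃ D) (hF : ∀ q, F q = some (E q)) (x : G.data.A Q) (v : G.data.A (Fin 1))
    (fam : (d : D) → G.data.A (pfib F d))
    (hfam : ∀ d, ∃ e : Fin 1 ≃ pfib F d, fam d = G.data.map e v) :
    G.data.contr F x fam = G.data.map E (G.rcontr x v) := by
  rw [← G.map_eq_contr E (G.rcontr x v)]
  unfold rcontr
  rw [← G.left_adj]
  refine contr_congr G (funext hF) x fun d => ?_
  obtain ⟨e, he⟩ := hfam d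
  obtain ⟨E', -, h⟩ := emul_apply_eq_map_lact G (fun q => some (E q)) (fun q : Q => some q)
    (equivFiberEquiv E d) (E.symm d) rfl G.data.one
    (fun d => G.data.map (equivFiberEquiv E d) G.data.one) rfl
    (fun q => G.data.map (idFiberEquiv q) v)
  rw [he, h, G.one_lact, ← G.map_trans]
  exact map_heq_map_of_subsingleton G (congrArg (fun F => pfib F d) (funext hF))
    (pfib_subsingleton_of_injective (F := pcomp (fun q => some (E q)) (fun q : Q => some q))
      (fun _ => rfl) E.injective d) _ _ v

theorem map_rcontr {Q D : Type} [Finite Q] [Finite D] (B : Q ≃ D) (x : G.data.A Q)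
    (v : G.data.A (Fin 1)) : G.data.map B (G.rcontr x v) = G.rcontr (G.data.map B x) v := by
  have hunits : ∀ d, ∃ e : Fin 1 ≃ pfib (pcomp (fun d : D => some d) (fun q => some (B q))) d,
      G.data.emul (fun d : D => some d) (fun q => some (B q))
        (fun d => G.data.map (idFiberEquiv d) v)
        (fun d => G.data.map (equivFiberEquiv B d) G.data.one) d = G.data.map e v := by
    intro d
    obtain ⟨E, -, h⟩ := emul_apply_eq_map_lact G (fun d : D => some d) (fun q => some (B q))
      (idFiberEquiv d) d rfl v (fun d => G.data.map (idFiberEquiv d) v) rfl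
      (fun d => G.data.map (equivFiberEquiv B d) G.data.one)
    exact ⟨(equivFiberEquiv B d).trans E, by rw [h, ← map_lact, lact_one_right, G.map_trans]⟩
  rw [← contr_graph_eq_map_rcontr G (pcomp (fun d : D => some d) (fun q => some (B q))) B
    (fun _ => rfl) x v _ hunits, G.left_adj, G.map_eq_contr]
  rfl

theorem lact_adj {X : Type} [Finite X] (v : G.data.A (Fin 1)) (w : G.data.A X) :
    G.data.lact (G.data.adj v) w = G.rcontr w v := by
  refine (mul_contr_of_const G (fun _ : X => some (0 : Fin 1)) (fun _ : Fin 1 => some 0)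
    (fun _ => rfl) rfl G.data.one (fun z => G.data.map (constFiberEquiv (Fin 1) z) v)
    (fun z => G.data.map (constFiberEquiv X z) w) w rfl).trans ?_
  rw [G.one_lact, contr_graph_eq_map_rcontr G (fpFst _ _)
      (equivFPOfConst (fun _ : X => some (0 : Fin 1)) (fun _ : Fin 1 => some 0) (fun _ => rfl)
        rfl).symm (fun _ => rfl) _ v,
    map_rcontr, ← G.map_trans, Equiv.self_trans_symm, G.map_refl]
  intro d
  rw [G.data.ctilde_of_eq (fun _ : X => some (0 : Fin 1)) _ _ (z := d) rfl, ← G.map_trans]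
  exact ⟨_, rfl⟩

theorem econtr_some_right {X Y : Type} [Finite X] [Finite Y] (f : X → Option Y)
    (b : (y : Y) → G.data.A (pfib f y)) (v : G.data.A (Fin 1)) :
    G.data.econtr f (fun x : X => some x) b (fun x => G.data.map (idFiberEquiv x) v)
      = fun y => G.rcontr (b y) v := by
  funext y
  have hF : ∀ p, resMap f (fun x : X => some x) y p = some p := by
    intro p
    show (some p.1).bind _ = _
    rw [Option.bind_some, dif_pos (show f p.1 = some y from p.2)]
    rfl
  refine (contr_graph_eq_map_rcontr G _
    (Equiv.refl _ : pfib (pcomp f (fun x : X => some x)) y ≃ pfib f y) hF (b y) v _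
    fun p => ⟨_, (G.map_trans _ _ _).symm⟩).trans (G.map_refl _ _)

theorem rcontr_mul {X Y : Type} [Finite X] [Finite Y] (f : X → Option Y) (u : G.data.A Y)
    (b : (y : Y) → G.data.A (pfib f y)) (v : G.data.A (Fin 1)) :
    G.rcontr (G.data.mul f u b) v = G.data.mul f u (fun y => G.rcontr (b y) v) := by
  rw [← econtr_some_right]
  exact G.left_lin f (fun x : X => some x) u b _

theorem contr_ract {X Y : Type} [Finite X] [Finite Y] (f : X → Option Y) (u : G.data.A X)
    (b : (y : Y) → G.data.A (pfib f y)) (v : G.data.A (Fin 1)) :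
    G.data.contr f (G.data.ract u (fun _ => v)) b
      = G.data.contr f u (fun y => G.rcontr (b y) v) := by
  rw [← econtr_some_right]
  exact G.right_adj f (fun x : X => some x) u b _

theorem ract_const {X : Type} [Finite X] (w : G.data.A X) (v : G.data.A (Fin 1)) :
    G.data.ract w (fun _ => v) = G.rcontr w (G.data.adj v) := by
  refine (G.contr_one_id X _).symm.trans ((G.right_adj (fun x : X => some x)
    (fun x : X => some x) w (G.data.oneId X) _).trans ?_)
  rw [econtr_some_right, GenRingData.adj, pair_eq_rcontr]
  exact congrArg _ (funext fun x => (map_rcontr G (idFiberEquiv x) G.data.one v).symm)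

theorem rcontr_contr {X Y : Type} [Finite X] [Finite Y] (f : X → Option Y) (u : G.data.A X)
    (b : (y : Y) → G.data.A (pfib f y)) (v : G.data.A (Fin 1)) :
    G.rcontr (G.data.contr f u b) v = G.data.contr f u (fun y => G.data.lact v (b y)) := by
  rw [rcontr, ← G.left_adj]
  exact contr_congr G (pcomp_some_left f) u (emul_some_left_heq G f v b)

theorem lact_ctilde {X Y Z : Type} [Finite X] [Finite Y] [Finite Z]
    (g : Z → Option Y) (f : X → Option Y) (c : (y : Y) → G.data.A (pfib f y))
    (v : G.data.A (Fin 1)) (z : Z) :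
    G.data.lact v (G.data.ctilde g f c z) = G.data.ctilde g f (fun y => G.data.lact v (c y)) z := by
  unfold GenRingData.ctilde
  split
  · exact (map_lact G _ _ _).symm
  · exact lact_zero G v

theorem ctilde_some_right_eq_emul {X Y : Type} [Finite X] [Finite Y] (f : X → Option Y)
    (v : G.data.A (Fin 1)) :
    G.data.ctilde f (fun y : Y => some y) (fun y => G.data.map (idFiberEquiv y) v)
      = G.data.emul (fun x : X => some x) (fpFst f (fun y : Y => some y))
          (fun x => G.data.map (idFiberEquiv x) v)
          (G.data.ctilde f (fun y : Y => some y) (G.data.oneId Y)) := by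
  funext x
  have h := eq_of_heq (emul_some_left_heq G (fpFst f (fun y : Y => some y)) v
    (G.data.ctilde f (fun y : Y => some y) (G.data.oneId Y)) x)
  rw [h, lact_ctilde]
  congr 1
  funext y
  rw [GenRingData.oneId, ← map_lact, lact_one_right]

theorem mul_rcontr {X Y : Type} [Finite X] [Finite Y] (f : X → Option Y) (u : G.data.A Y)
    (b : (y : Y) → G.data.A (pfib f y)) (v : G.data.A (Fin 1)) :
    G.data.mul f (G.rcontr u v) b = G.rcontr (G.data.mul f u b) v := by
  have hu := G.right_lin f (fun y : Y => some y) u b (G.data.oneId Y)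
  rw [G.contr_one_id] at hu
  rw [rcontr, G.right_lin f (fun y : Y => some y) u b, ctilde_some_right_eq_emul, hu]
  exact G.left_adj (fun x : X => some x) (fpFst f (fun y : Y => some y)) _ _ _

theorem lact_eq_rcontr {X : Type} [Finite X] {t : G.data.A (Fin 1)} (ht : G.data.adj t = t)
    (w : G.data.A X) : G.data.lact t w = G.rcontr w t := by
  rw [← G.lact_adj, ht]

theorem op_comm (hsa : ∀ x : G.data.A (Fin 1), G.data.adj x = x) (a b : G.data.A (Fin 1)) :
    G.data.op a b = G.data.op b a := by
  calc G.data.op a b = G.data.lact a b := op_eq_lact G a b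
    _ = G.rcontr b (G.data.adj a) := by rw [hsa a, lact_eq_rcontr G (hsa a)]
    _ = G.data.op b a := (ract_const G b a).symm

theorem op_right_comm (hsa : ∀ x : G.data.A (Fin 1), G.data.adj x = x)
    (a b c : G.data.A (Fin 1)) :
    G.data.op (G.data.op a b) c = G.data.op (G.data.op a c) b := by
  rw [← op_assoc, ← op_assoc, op_comm G hsa b c]

theorem mul_lact_base {X Y : Type} [Finite X] [Finite Y] (f : X → Option Y)
    {t : G.data.A (Fin 1)} (ht : G.data.adj t = t) (u : G.data.A Y)
    (b : (y : Y) → G.data.A (pfib f y)) :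
    G.data.mul f (G.data.lact t u) b = G.data.lact t (G.data.mul f u b) := by
  rw [lact_eq_rcontr G ht, mul_rcontr, ← lact_eq_rcontr G ht]

theorem mul_lact_fiber {X Y : Type} [Finite X] [Finite Y] (f : X → Option Y)
    {t : G.data.A (Fin 1)} (ht : G.data.adj t = t) (u : G.data.A Y)
    (b : (y : Y) → G.data.A (pfib f y)) :
    G.data.mul f u (fun y => G.data.lact t (b y)) = G.data.lact t (G.data.mul f u b) := by
  simp only [lact_eq_rcontr G ht, rcontr_mul]

theorem contr_lact_fiber {X Y : Type} [Finite X] [Finite Y] (f : X → Option Y)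
    {t : G.data.A (Fin 1)} (ht : G.data.adj t = t) (u : G.data.A X)
    (b : (y : Y) → G.data.A (pfib f y)) :
    G.data.contr f u (fun y => G.data.lact t (b y)) = G.data.lact t (G.data.contr f u b) := by
  rw [← rcontr_contr, ← lact_eq_rcontr G ht]

theorem contr_lact_base {X Y : Type} [Finite X] [Finite Y] (f : X → Option Y)
    {t : G.data.A (Fin 1)} (ht : G.data.adj t = t) (u : G.data.A X)
    (b : (y : Y) → G.data.A (pfib f y)) :
    G.data.contr f (G.data.lact t u) b = G.data.lact t (G.data.contr f u b) := by
  have hlact : G.data.lact t u = G.data.ract u (fun _ => t) := by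
    rw [ract_const, ht, lact_eq_rcontr G ht]
  rw [hlact, contr_ract, ← contr_lact_fiber G f ht]
  simp only [lact_eq_rcontr G ht]

abbrev opCommMonoid (hsa : ∀ x : G.data.A (Fin 1), G.data.adj x = x) :
    CommMonoid (G.data.A (Fin 1)) where
  mul := G.data.op
  one := G.data.one
  mul_assoc a b c := (G.op_assoc a b c).symm
  one_mul := G.op_one_left
  mul_one := G.op_one_right
  mul_comm := G.op_comm hsa

end GenRing

namespace GenRing.IsHIdeal

variable {G : GenRing} {I : Set (G.data.A (Fin 1))}

theorem zero_mem (hI : G.IsHIdeal I) : G.data.zero (Fin 1) ∈ I := by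
  have h := hI Empty (G.data.zero _) (G.data.zero _) Empty.elim (fun x => x.elim)
  rwa [GenRingData.ract, G.mul_zero_left, GenRingData.pair, G.contr_zero_left] at h

theorem op_mem (hI : G.IsHIdeal I) (t : G.data.A (Fin 1)) {i : G.data.A (Fin 1)} (hi : i ∈ I) :
    G.data.op t i ∈ I := by
  have h := hI (Fin 1) t G.data.one (fun _ => i) fun _ => hi
  rwa [G.pair_one_right] at h

end GenRing.IsHIdeal

namespace SpecG

variable {G : GenRing} (p : SpecG G)

theorem op_notMem {s t : G.data.A (Fin 1)} (hs : s ∉ p.I) (ht : t ∉ p.I) :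
    G.data.op s t ∉ p.I :=
  fun h => (p.prime.2.2 s t h).elim hs ht

theorem exists_common_multiple (hsa : ∀ x : G.data.A (Fin 1), G.data.adj x = x)
    {Y : Type} [Finite Y] (s : Y → G.data.A (Fin 1)) (hs : ∀ y, s y ∉ p.I) :
    ∃ t ∉ p.I, ∀ y, ∃ r, t = G.data.op r (s y) := by
  let := G.opCommMonoid hsa
  have := Fintype.ofFinite Y
  exact ⟨∏ y, s y,
    Finset.prod_induction s (· ∉ p.I) (fun _ _ => p.op_notMem) p.prime.2.1 fun y _ => hs y,
    fun y => ⟨_, (Finset.prod_erase_mul _ s (Finset.mem_univ y)).symm⟩⟩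

end SpecG

namespace EqvIdeal

variable {G : GenRing} (E : EqvIdeal G)

theorem rel_map {X Y : Type} [Finite X] [Finite Y] (e : X ≃ Y) {x y : G.data.A X}
    (h : E.rel X x y) : E.rel Y (G.data.map e x) (G.data.map e y) := by
  rw [← G.map_eq_contr e x, ← G.map_eq_contr e y]
  exact E.contr_left _ _ h

theorem rel_lact {X : Type} [Finite X] (s : G.data.A (Fin 1)) {x y : G.data.A X}
    (h : E.rel X x y) : E.rel X (G.data.lact s x) (G.data.lact s y) :=
  E.mul_right _ s fun z => E.rel_map (constFiberEquiv X z) h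

theorem rel_op (s : G.data.A (Fin 1)) {x y : G.data.A (Fin 1)} (h : E.rel (Fin 1) x y) :
    E.rel (Fin 1) (G.data.op s x) (G.data.op s y) :=
  E.mul_right _ s fun z => E.rel_map (idFiberEquiv z) h

theorem rel_mul {X Y : Type} [Finite X] [Finite Y] (f : X → Option Y) {a a' : G.data.A Y}
    {b b' : (y : Y) → G.data.A (pfib f y)} (ha : E.rel Y a a')
    (hb : ∀ y, E.rel _ (b y) (b' y)) :
    E.rel X (G.data.mul f a b) (G.data.mul f a' b') :=
  E.trans X (E.mul_left f b ha) (E.mul_right f a' hb)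

theorem rel_contr {X Y : Type} [Finite X] [Finite Y] (f : X → Option Y) {a a' : G.data.A X}
    {b b' : (y : Y) → G.data.A (pfib f y)} (ha : E.rel X a a')
    (hb : ∀ y, E.rel _ (b y) (b' y)) :
    E.rel Y (G.data.contr f a b) (G.data.contr f a' b') :=
  E.trans Y (E.contr_left f b ha) (E.contr_right f a' hb)

def comap {R : GenRing} (ψ : GenRingHom R G) : EqvIdeal R where
  rel X _ x y := E.rel X (ψ.app X x) (ψ.app X y)
  refl X _ _ := E.refl X _
  symm X _ _ _ h := E.symm X h
  trans X _ _ _ _ h₁ h₂ := E.trans X h₁ h₂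
  mul_left f _ _ b h := by
    simp only [ψ.app_mul]
    exact E.mul_left f _ h
  mul_right f a _ _ h := by
    simp only [ψ.app_mul]
    exact E.mul_right f _ h
  contr_left f _ _ b h := by
    simp only [ψ.app_contr]
    exact E.contr_left f _ h
  contr_right f a _ _ h := by
    simp only [ψ.app_contr]
    exact E.contr_right f _ h

end EqvIdeal

namespace GenRing

variable (G : GenRing)

def generatedEqvIdeal (I : Set (G.data.A (Fin 1))) : EqvIdeal G where
  rel X _ a b := G.erel I X a b
  refl X _ a _ _ := EqvIdeal.refl _ X a
  symm X _ _ _ h E hE := E.symm X (h E hE)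
  trans X _ _ _ _ h₁ h₂ E hE := E.trans X (h₁ E hE) (h₂ E hE)
  mul_left f _ _ b h E hE := E.mul_left f b (h E hE)
  mul_right f a _ _ h E hE := E.mul_right f a fun y => h y E hE
  contr_left f _ _ b h E hE := E.contr_left f b (h E hE)
  contr_right f a _ _ h E hE := E.contr_right f a fun y => h y E hE

theorem erel_of_mem {I : Set (G.data.A (Fin 1))} {i : G.data.A (Fin 1)} (hi : i ∈ I) :
    G.erel I (Fin 1) i (G.data.zero (Fin 1)) :=
  fun _ hE => hE i hi

end GenRing

namespace GenRingHom

variable {R S : GenRing} (ψ : GenRingHom R S)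

theorem app_adj (a : R.data.A (Fin 1)) :
    ψ.app (Fin 1) (R.data.adj a) = S.data.adj (ψ.app (Fin 1) a) := by
  rw [GenRingData.adj, ψ.app_pair, ψ.app_one]
  rfl

theorem adj_app_of_selfAdjoint (hsa : ∀ x : R.data.A (Fin 1), R.data.adj x = x)
    (a : R.data.A (Fin 1)) : S.data.adj (ψ.app (Fin 1) a) = ψ.app (Fin 1) a := by
  rw [← ψ.app_adj, hsa]

theorem erel_app {I : Set (R.data.A (Fin 1))} {J : Set (S.data.A (Fin 1))}
    (hIJ : ∀ i ∈ I, ψ.app (Fin 1) i ∈ J) {X : Type} [Finite X] {a b : R.data.A X}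
    (h : R.erel I X a b) : S.erel J X (ψ.app X a) (ψ.app X b) :=
  fun ω hω => h (ω.comap ψ) fun i hi => by
    show ω.rel _ (ψ.app _ i) (ψ.app _ (R.data.zero _))
    rw [ψ.app_zero]
    exact hω _ (hIJ i hi)

end GenRingHom

namespace GenRing

section Localization

variable {R L : GenRing} (φ : GenRingHom R L) (p : SpecG R)

theorem lact_app_mul (hsa : ∀ x : R.data.A (Fin 1), R.data.adj x = x) {X Y : Type} [Finite X]
    [Finite Y] (f : X → Option Y) {u : L.data.A Y} {b : (y : Y) → L.data.A (pfib f y)}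
    {s t : R.data.A (Fin 1)} {a : R.data.A Y} {c : (y : Y) → R.data.A (pfib f y)}
    (hu : L.data.lact (φ.app (Fin 1) s) u = φ.app Y a)
    (hb : ∀ y, L.data.lact (φ.app (Fin 1) t) (b y) = φ.app _ (c y)) :
    L.data.lact (φ.app (Fin 1) (R.data.op s t)) (L.data.mul f u b)
      = φ.app X (R.data.mul f a c) := by
  rw [φ.app_op, ← L.lact_lact, ← L.mul_lact_fiber f (φ.adj_app_of_selfAdjoint hsa t),
    funext hb, ← L.mul_lact_base f (φ.adj_app_of_selfAdjoint hsa s), hu, φ.app_mul]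

theorem lact_app_contr (hsa : ∀ x : R.data.A (Fin 1), R.data.adj x = x) {X Y : Type} [Finite X]
    [Finite Y] (f : X → Option Y) {u : L.data.A X} {b : (y : Y) → L.data.A (pfib f y)}
    {s t : R.data.A (Fin 1)} {a : R.data.A X} {c : (y : Y) → R.data.A (pfib f y)}
    (hu : L.data.lact (φ.app (Fin 1) s) u = φ.app X a)
    (hb : ∀ y, L.data.lact (φ.app (Fin 1) t) (b y) = φ.app _ (c y)) :
    L.data.lact (φ.app (Fin 1) (R.data.op s t)) (L.data.contr f u b)
      = φ.app Y (R.data.contr f a c) := by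
  rw [φ.app_op, ← L.lact_lact, ← L.contr_lact_fiber f (φ.adj_app_of_selfAdjoint hsa t),
    funext hb, ← L.contr_lact_base f (φ.adj_app_of_selfAdjoint hsa s), hu, φ.app_contr]

/-- The localization `S_𝔭⁻¹E(𝔭)` of the equivalence ideal generated by `𝔭`. -/
def LocRel (X : Type) [Finite X] (u v : L.data.A X) : Prop :=
  ∃ s ∉ p.I, ∃ a b : R.data.A X, L.data.lact (φ.app (Fin 1) s) u = φ.app X a ∧
    L.data.lact (φ.app (Fin 1) s) v = φ.app X b ∧ R.erel p.I X a b

variable {φ p}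

theorem LocRel.refl (hloc : R.IsLocalizationAt {a | a ∉ p.I} φ) {X : Type} [Finite X]
    (u : L.data.A X) : LocRel φ p X u u := by
  obtain ⟨a, s, hs, h⟩ := hloc.2.1 X u
  exact ⟨s, hs, a, a, h, h, (R.generatedEqvIdeal p.I).refl X a⟩

theorem LocRel.symm {X : Type} [Finite X] {u v : L.data.A X} (h : LocRel φ p X u v) :
    LocRel φ p X v u := by
  obtain ⟨s, hs, a, b, ha, hb, hab⟩ := h
  exact ⟨s, hs, b, a, hb, ha, (R.generatedEqvIdeal p.I).symm X hab⟩

theorem LocRel.trans (hsa : ∀ x : R.data.A (Fin 1), R.data.adj x = x)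
    (hloc : R.IsLocalizationAt {a | a ∉ p.I} φ) {X : Type} [Finite X] {u v w : L.data.A X}
    (huv : LocRel φ p X u v) (hvw : LocRel φ p X v w) : LocRel φ p X u w := by
  obtain ⟨s, hs, a, b, ha, hb, hab⟩ := huv
  obtain ⟨t, ht, c, d, hc, hd, hcd⟩ := hvw
  have hmid : φ.app X (R.data.lact t b) = φ.app X (R.data.lact s c) := by
    rw [φ.app_lact, φ.app_lact, ← hb, ← hc, L.lact_lact, L.lact_lact, ← φ.app_op,
      ← φ.app_op, R.op_comm hsa]
  obtain ⟨r, hr, hbc⟩ := (hloc.2.2 X _ _).mp hmid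
  rw [R.lact_lact, R.lact_lact] at hbc
  refine ⟨R.data.op (R.data.op r t) s, p.op_notMem (p.op_notMem hr ht) hs,
    R.data.lact (R.data.op r t) a, R.data.lact (R.data.op r s) d, ?_, ?_, ?_⟩
  · rw [φ.app_op, ← L.lact_lact, ha, ← φ.app_lact]
  · rw [R.op_right_comm hsa, φ.app_op, ← L.lact_lact, hd, ← φ.app_lact]
  · have h₁ := (R.generatedEqvIdeal p.I).rel_lact (R.data.op r t) hab
    rw [hbc] at h₁
    exact (R.generatedEqvIdeal p.I).trans X h₁
      ((R.generatedEqvIdeal p.I).rel_lact (R.data.op r s) hcd)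

theorem LocRel.exists_common_denom (hsa : ∀ x : R.data.A (Fin 1), R.data.adj x = x)
    {Y : Type} [Finite Y] {T : Y → Type} [∀ y, Finite (T y)] {b b' : (y : Y) → L.data.A (T y)}
    (h : ∀ y, LocRel φ p (T y) (b y) (b' y)) :
    ∃ t ∉ p.I, ∃ c c' : (y : Y) → R.data.A (T y),
      (∀ y, L.data.lact (φ.app (Fin 1) t) (b y) = φ.app _ (c y)) ∧
      (∀ y, L.data.lact (φ.app (Fin 1) t) (b' y) = φ.app _ (c' y)) ∧
      ∀ y, R.erel p.I (T y) (c y) (c' y) := by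
  choose s hs a a' ha ha' haa' using h
  obtain ⟨t, ht, hst⟩ := p.exists_common_multiple hsa s hs
  choose r hr using hst
  have hnum : ∀ y (l : L.data.A (T y)) (x : R.data.A (T y)),
      L.data.lact (φ.app (Fin 1) (s y)) l = φ.app _ x →
        L.data.lact (φ.app (Fin 1) t) l = φ.app _ (R.data.lact (r y) x) := by
    intro y l x hl
    rw [hr y, φ.app_op, ← L.lact_lact, hl, φ.app_lact]
  exact ⟨t, ht, _, _, fun y => hnum y _ _ (ha y), fun y => hnum y _ _ (ha' y),
    fun y => (R.generatedEqvIdeal p.I).rel_lact (r y) (haa' y)⟩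

theorem LocRel.mul (hsa : ∀ x : R.data.A (Fin 1), R.data.adj x = x) {X Y : Type} [Finite X]
    [Finite Y] (f : X → Option Y) {u u' : L.data.A Y} {b b' : (y : Y) → L.data.A (pfib f y)}
    (hu : LocRel φ p Y u u') (hb : ∀ y, LocRel φ p _ (b y) (b' y)) :
    LocRel φ p X (L.data.mul f u b) (L.data.mul f u' b') := by
  obtain ⟨s, hs, a, a', ha, ha', haa'⟩ := hu
  obtain ⟨t, ht, c, c', hc, hc', hcc'⟩ := LocRel.exists_common_denom hsa hb
  exact ⟨R.data.op s t, p.op_notMem hs ht, R.data.mul f a c, R.data.mul f a' c',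
    lact_app_mul φ hsa f ha hc, lact_app_mul φ hsa f ha' hc',
    (R.generatedEqvIdeal p.I).rel_mul f haa' hcc'⟩

theorem LocRel.contr (hsa : ∀ x : R.data.A (Fin 1), R.data.adj x = x) {X Y : Type} [Finite X]
    [Finite Y] (f : X → Option Y) {u u' : L.data.A X} {b b' : (y : Y) → L.data.A (pfib f y)}
    (hu : LocRel φ p X u u') (hb : ∀ y, LocRel φ p _ (b y) (b' y)) :
    LocRel φ p Y (L.data.contr f u b) (L.data.contr f u' b') := by
  obtain ⟨s, hs, a, a', ha, ha', haa'⟩ := hu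
  obtain ⟨t, ht, c, c', hc, hc', hcc'⟩ := LocRel.exists_common_denom hsa hb
  exact ⟨R.data.op s t, p.op_notMem hs ht, R.data.contr f a c, R.data.contr f a' c',
    lact_app_contr φ hsa f ha hc, lact_app_contr φ hsa f ha' hc',
    (R.generatedEqvIdeal p.I).rel_contr f haa' hcc'⟩

def locEqvIdeal (hsa : ∀ x : R.data.A (Fin 1), R.data.adj x = x)
    (hloc : R.IsLocalizationAt {a | a ∉ p.I} φ) : EqvIdeal L where
  rel := LocRel φ p
  refl _ _ := LocRel.refl hloc
  symm _ _ _ _ := LocRel.symm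
  trans _ _ _ _ _ := LocRel.trans hsa hloc
  mul_left f _ _ _ h := LocRel.mul hsa f h fun _ => LocRel.refl hloc _
  mul_right f _ _ _ h := LocRel.mul hsa f (LocRel.refl hloc _) h
  contr_left f _ _ _ h := LocRel.contr hsa f h fun _ => LocRel.refl hloc _
  contr_right f _ _ _ h := LocRel.contr hsa f (LocRel.refl hloc _) h

variable (φ p)

def localizedPrime : Set (L.data.A (Fin 1)) :=
  {l | ∃ a ∈ p.I, ∃ s ∉ p.I, L.data.op (φ.app (Fin 1) s) l = φ.app (Fin 1) a}

variable {φ p}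

theorem app_mem_localizedPrime {i : R.data.A (Fin 1)} (hi : i ∈ p.I) :
    φ.app (Fin 1) i ∈ localizedPrime φ p :=
  ⟨i, hi, R.data.one, p.prime.2.1, by rw [φ.app_one, L.op_one_left]⟩

theorem mem_of_app_mem_localizedPrime (hloc : R.IsLocalizationAt {a | a ∉ p.I} φ)
    {x : R.data.A (Fin 1)} (hx : φ.app (Fin 1) x ∈ localizedPrime φ p) : x ∈ p.I := by
  obtain ⟨c, hc, s, hs, hsx⟩ := hx
  rw [← φ.app_op] at hsx
  obtain ⟨r, hr, hrsx⟩ := (hloc.2.2 (Fin 1) _ _).mp hsx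
  rw [← R.op_eq_lact, ← R.op_eq_lact, R.op_assoc] at hrsx
  have hmem : R.data.op (R.data.op r s) x ∈ p.I := hrsx ▸ p.prime.1.op_mem r hc
  exact (p.prime.2.2 _ _ hmem).resolve_left (p.op_notMem hr hs)

/-- Elements outside `m_𝔭` are units of `R_𝔭`. -/
theorem mem_localizedPrime_of_erel_zero (hloc : R.IsLocalizationAt {a | a ∉ p.I} φ)
    (h10 : ¬ L.erel (localizedPrime φ p) (Fin 1) L.data.one (L.data.zero _))
    {z : L.data.A (Fin 1)} (hz : L.erel (localizedPrime φ p) (Fin 1) z (L.data.zero _)) :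
    z ∈ localizedPrime φ p := by
  by_contra hzm
  obtain ⟨a, s, hs, hsz⟩ := hloc.2.1 (Fin 1) z
  have ha : a ∉ p.I := fun ha => hzm ⟨a, ha, s, hs, by rw [L.op_eq_lact, hsz]⟩
  obtain ⟨t, ht, -⟩ := hloc.1 a ha
  have h := (L.generatedEqvIdeal _).rel_op (L.data.op t (φ.app (Fin 1) s)) hz
  rw [← L.op_assoc, L.op_eq_lact (φ.app (Fin 1) s) z, hsz, ht, L.op_zero_right] at h
  exact h10 h

theorem mem_iff_erel_app_zero (hloc : R.IsLocalizationAt {a | a ∉ p.I} φ)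
    (h10 : ¬ L.erel (localizedPrime φ p) (Fin 1) L.data.one (L.data.zero _))
    (x : R.data.A (Fin 1)) :
    x ∈ p.I ↔ L.erel (localizedPrime φ p) (Fin 1) (φ.app (Fin 1) x) (L.data.zero _) :=
  ⟨fun hx => L.erel_of_mem (app_mem_localizedPrime hx), fun h =>
    mem_of_app_mem_localizedPrime hloc (mem_localizedPrime_of_erel_zero hloc h10 h)⟩

theorem stable_of_not_erel_one_zero (hloc : R.IsLocalizationAt {a | a ∉ p.I} φ)
    (h10 : ¬ L.erel (localizedPrime φ p) (Fin 1) L.data.one (L.data.zero _))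
    (a b : R.data.A (Fin 1)) (hab : R.erel p.I (Fin 1) a b) : a ∈ p.I ↔ b ∈ p.I := by
  have hφ := φ.erel_app (J := localizedPrime φ p) (fun _ => app_mem_localizedPrime) hab
  rw [mem_iff_erel_app_zero hloc h10, mem_iff_erel_app_zero hloc h10]
  exact ⟨(L.generatedEqvIdeal _).trans _ ((L.generatedEqvIdeal _).symm _ hφ),
    (L.generatedEqvIdeal _).trans _ hφ⟩

theorem locRel_of_erel (hsa : ∀ x : R.data.A (Fin 1), R.data.adj x = x)
    (hloc : R.IsLocalizationAt {a | a ∉ p.I} φ) {X : Type} [Finite X] {u v : L.data.A X}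
    (h : L.erel (localizedPrime φ p) X u v) : LocRel φ p X u v :=
  h (locEqvIdeal hsa hloc) fun _ ⟨c, hc, s, hs, hsl⟩ =>
    ⟨s, hs, c, R.data.zero _, by rw [← L.op_eq_lact, hsl], by rw [L.lact_zero, φ.app_zero],
      R.erel_of_mem hc⟩

theorem not_erel_one_zero_of_stable (hsa : ∀ x : R.data.A (Fin 1), R.data.adj x = x)
    (hloc : R.IsLocalizationAt {a | a ∉ p.I} φ)
    (hst : ∀ a b : R.data.A (Fin 1), R.erel p.I (Fin 1) a b → (a ∈ p.I ↔ b ∈ p.I)) :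
    ¬ L.erel (localizedPrime φ p) (Fin 1) L.data.one (L.data.zero _) := by
  intro h10
  obtain ⟨s, hs, a, b, ha, hb, hab⟩ := locRel_of_erel hsa hloc h10
  rw [← L.op_eq_lact, L.op_one_right] at ha
  rw [L.lact_zero, ← φ.app_zero] at hb
  obtain ⟨r, hr, hrs⟩ := (hloc.2.2 _ _ _).mp ha
  obtain ⟨r', hr', hrb⟩ := (hloc.2.2 _ _ _).mp hb.symm
  rw [← R.op_eq_lact, ← R.op_eq_lact] at hrs hrb
  have hrrb : R.data.op r' (R.data.op r b) = R.data.zero _ := by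
    rw [R.op_assoc, R.op_comm hsa r' r, ← R.op_assoc, hrb, R.op_zero_right, R.op_zero_right]
  have h := (R.generatedEqvIdeal p.I).rel_op r' ((R.generatedEqvIdeal p.I).rel_op r hab)
  rw [← hrs, hrrb] at h
  exact p.op_notMem hr' (p.op_notMem hr hs) ((hst _ _ h).mpr p.prime.1.zero_mem)

theorem not_erel_one_zero_iff_stable (hsa : ∀ x : R.data.A (Fin 1), R.data.adj x = x)
    (hloc : R.IsLocalizationAt {a | a ∉ p.I} φ) :
    ¬ L.erel (localizedPrime φ p) (Fin 1) L.data.one (L.data.zero _) ↔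
      ∀ a b : R.data.A (Fin 1), R.erel p.I (Fin 1) a b → (a ∈ p.I ↔ b ∈ p.I) :=
  ⟨stable_of_not_erel_one_zero hloc, not_erel_one_zero_of_stable hsa hloc⟩

end Localization

end GenRing

theorem residueField_nonzero_iff_stable_general (R : GenRing)
    (hsa : ∀ x : R.data.A (Fin 1), R.data.adj x = x) (p : SpecG R)
    (L : GenRing) (φ : GenRingHom R L)
    (hloc : R.IsLocalizationAt {a | a ∉ p.I} φ)
    (K : GenRing) (π : GenRingHom L K)
    (hker : ∀ (X : Type) [Finite X] (u v : L.data.A X),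
        π.app X u = π.app X v ↔
          L.erel {l : L.data.A (Fin 1) | ∃ a ∈ p.I, ∃ s ∉ p.I,
            L.data.op (φ.app (Fin 1) s) l = φ.app (Fin 1) a} X u v) :
    K.data.one ≠ K.data.zero (Fin 1) ↔
      (∀ a b : R.data.A (Fin 1), R.erel p.I (Fin 1) a b → (a ∈ p.I ↔ b ∈ p.I)) := by
  rw [← π.app_one, ← π.app_zero]
  exact (hker _ _ _).not.trans (GenRing.not_erel_one_zero_iff_stable hsa hloc)

/-- **Nonvanishing of the residue field detects stability.**  Let `R` be a self-adjoint
generalized ring and `𝔭` a prime.  Let `φ : R → L` present `L` as the localization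
`R_𝔭` of `R` at `S_𝔭 = A_{[1]} ∖ 𝔭`, let `m_𝔭 = S_𝔭⁻¹𝔭 ⊆ L_{[1]}` be its maximal
`h`-ideal, and let `π : L → K` present `K` as the quotient `F_𝔭 = R_𝔭 / E(m_𝔭)` of `L`
by the equivalence ideal generated by `m_𝔭` (i.e. `π` is surjective with kernel `E(m_𝔭)`).
Then the residue field `K = F_𝔭` is nonzero (`1 ≠ 0` in `K_{[1]}`) if and only if the
prime `𝔭` is stable. -/
theorem residueField_nonzero_iff_stable (R : GenRing)
    (hsa : ∀ x : R.data.A (Fin 1), R.data.adj x = x) (p : SpecG R)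
    (L : GenRing) (φ : GenRingHom R L)
    (hloc : R.IsLocalizationAt {a | a ∉ p.I} φ)
    (K : GenRing) (π : GenRingHom L K)
    (hsurj : ∀ (X : Type) [Finite X], Function.Surjective (π.app X))
    (hker : ∀ (X : Type) [Finite X] (u v : L.data.A X),
        π.app X u = π.app X v ↔
          L.erel {l : L.data.A (Fin 1) | ∃ a ∈ p.I, ∃ s ∉ p.I,
            L.data.op (φ.app (Fin 1) s) l = φ.app (Fin 1) a} X u v) :
    K.data.one ≠ K.data.zero (Fin 1) ↔
      (∀ a b : R.data.A (Fin 1), R.erel p.I (Fin 1) a b → (a ∈ p.I ↔ b ∈ p.I)) :=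
  residueField_nonzero_iff_stable_general R hsa p L φ hloc K π hker

end
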